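/- arXiv:1911.03539 — 2 statements merged into one kernel-verified Lean document; each statement's English description precedes it below -/
import Mathlib

section
/- For every A ∈ S_+^d and ε ≥ 0, the matrix square root satisfies ||√(A + ε I_d) - √A||_F ≤ d √ε. -/
open Matrix
noncomputable section
open scoped Classical

/-- Positive semidefinite square root (0 if not PSD). -/
def psdSqrt {d : ℕ} (A : Matrix (Fin d) (Fin d) ℝ) : Matrix (Fin d) (Fin d) ℝ :=
  if h : A.PosSemidef then
    h.1.eigenvectorUnitary.1 * diagonal ((RCLike.ofReal : ℝ → ℝ) ∘ Real.sqrt ∘ h.1.eigenvalues) *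
      (star h.1.eigenvectorUnitary : Matrix (Fin d) (Fin d) ℝ)
  else 0

/-- Frobenius norm. -/
def frob {d : ℕ} (A : Matrix (Fin d) (Fin d) ℝ) : ℝ := Real.sqrt (Aᵀ * A).trace

/-- Trace inner product. -/
def ip {d : ℕ} (A B : Matrix (Fin d) (Fin d) ℝ) : ℝ := (Aᵀ * B).trace

/-- Largest eigenvalue of a symmetric matrix (0 if not symmetric). -/
def lamMax {d : ℕ} (A : Matrix (Fin d) (Fin d) ℝ) : ℝ :=
  if h : A.IsHermitian then ⨆ i, h.eigenvalues i else 0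

/-- Smallest eigenvalue of a symmetric matrix (0 if not symmetric). -/
def lamMin {d : ℕ} (A : Matrix (Fin d) (Fin d) ℝ) : ℝ :=
  if h : A.IsHermitian then ⨅ i, h.eigenvalues i else 0

/-- Gelbrich distance between two mean–covariance pairs. -/
def gelbrich {d : ℕ} (μ₁ μ₂ : EuclideanSpace ℝ (Fin d))
    (S₁ S₂ : Matrix (Fin d) (Fin d) ℝ) : ℝ :=
  Real.sqrt (‖μ₁ - μ₂‖ ^ 2 + (S₁ + S₂ - 2 • psdSqrt (psdSqrt S₂ * S₁ * psdSqrt S₂)).trace)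

open scoped MatrixOrder in
lemma psdSqrt_eq_of_sq_eq {d : ℕ} (A B : Matrix (Fin d) (Fin d) ℝ) (hA : A.PosSemidef)
    (hB : B.PosSemidef) (h : B ^ 2 = A) : psdSqrt A = B := by
  have hs : CFC.sqrt A = B := CFC.sqrt_unique (by rw [← pow_two]; exact h) hB.nonneg
  rw [← hs, CFC.sqrt_eq_cfc, cfc_nnreal_eq_real _ A, hA.1.cfc_eq, psdSqrt, dif_pos hA,
    IsHermitian.cfc, Unitary.conjStarAlgAut_apply]
  have hf : (fun x : ℝ => (NNReal.sqrt x.toNNReal : ℝ)) = Real.sqrt := by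
    funext x
    rw [Real.sqrt]
  rw [hf]

/-- `‖√(A + εI) − √A‖_F ≤ d √ε`. -/
theorem sqrt_add_eps_bound {d : ℕ} (A : Matrix (Fin d) (Fin d) ℝ)
    (hA : A.PosSemidef) (ε : ℝ) (hε : 0 ≤ ε) :
    frob (psdSqrt (A + ε • (1 : Matrix (Fin d) (Fin d) ℝ)) - psdSqrt A)
      ≤ d * Real.sqrt ε := by
  classical
  set h := hA.1 with hh
  set U : Matrix (Fin d) (Fin d) ℝ := (h.eigenvectorUnitary : Matrix (Fin d) (Fin d) ℝ) with hU
  have hUU : star U * U = 1 := (Matrix.mem_unitaryGroup_iff').mp h.eigenvectorUnitary.2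
  have hUU' : U * star U = 1 := (Matrix.mem_unitaryGroup_iff).mp h.eigenvectorUnitary.2
  set lam : Fin d → ℝ := h.eigenvalues with hlam
  set f : Fin d → ℝ := fun i => Real.sqrt (lam i + ε) with hf
  set g : Fin d → ℝ := fun i => Real.sqrt (lam i) with hg
  -- conjugation helper
  have conj_mul : ∀ p q : Fin d → ℝ,
      (U * diagonal p * star U) * (U * diagonal q * star U)
        = U * diagonal (fun i => p i * q i) * star U := by
    intro p q
    calc (U * diagonal p * star U) * (U * diagonal q * star U)
        = U * (diagonal p * (star U * U) * diagonal q) * star U := by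
          simp only [Matrix.mul_assoc]
      _ = U * diagonal (fun i => p i * q i) * star U := by
          rw [hUU, mul_one, diagonal_mul_diagonal]
  have hAdec : A = U * diagonal lam * star U := by
    have := h.spectral_theorem
    simpa using this
  have hEI : ε • (1 : Matrix (Fin d) (Fin d) ℝ) = U * diagonal (fun _ => ε) * star U := by
    have : diagonal (fun _ : Fin d => ε) = ε • (1 : Matrix (Fin d) (Fin d) ℝ) := by
      rw [← diagonal_one, ← diagonal_smul]
      ext i j
      by_cases hij : i = j <;> simp [Matrix.diagonal_apply, Matrix.one_apply, hij]
    rw [this, Matrix.mul_smul, Matrix.smul_mul, mul_one, hUU']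
  have hA' : (A + ε • (1 : Matrix (Fin d) (Fin d) ℝ)).PosSemidef := by
    refine hA.add ?_
    rw [hEI]
    exact (posSemidef_diagonal_iff.mpr fun i => hε).mul_mul_conjTranspose_same U
  -- the square root of A + εI
  have hBpsd : (U * diagonal f * star U).PosSemidef :=
    (posSemidef_diagonal_iff.mpr fun i => Real.sqrt_nonneg _).mul_mul_conjTranspose_same U
  have hBsq : (U * diagonal f * star U) ^ 2 = A + ε • (1 : Matrix (Fin d) (Fin d) ℝ) := by
    have hff : (fun i => Real.sqrt (lam i + ε) * Real.sqrt (lam i + ε))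
        = lam + fun _ => ε := by
      funext i
      simp only [Pi.add_apply]
      exact Real.mul_self_sqrt (add_nonneg (hA.eigenvalues_nonneg i) hε)
    rw [pow_two, conj_mul, hAdec, hEI, ← Matrix.add_mul, ← Matrix.mul_add, diagonal_add]
    simp only [hf]
    rw [hff]
    rfl
  have hsqrt1 : psdSqrt (A + ε • (1 : Matrix (Fin d) (Fin d) ℝ)) = U * diagonal f * star U := by
    exact psdSqrt_eq_of_sq_eq _ _ hA' hBpsd hBsq
  have hsqrt2 : psdSqrt A = U * diagonal g * star U := by
    rw [psdSqrt, dif_pos hA]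
    rfl
  -- the difference
  have hdiff : psdSqrt (A + ε • (1 : Matrix (Fin d) (Fin d) ℝ)) - psdSqrt A
      = U * diagonal (fun i => f i - g i) * star U := by
    rw [hsqrt1, hsqrt2, ← Matrix.sub_mul, ← Matrix.mul_sub, ← diagonal_sub]
  rw [hdiff]
  -- compute the Frobenius norm
  have htrans : (U * diagonal (fun i => f i - g i) * star U)ᵀ
      = U * diagonal (fun i => f i - g i) * star U := by
    have hherm : (U * diagonal (fun i => f i - g i) * star U).IsHermitian :=
      isHermitian_mul_mul_conjTranspose U (isHermitian_diagonal _)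
    have := hherm.eq
    rw [← Matrix.conjTranspose_eq_transpose_of_trivial]
    exact this
  rw [frob, htrans, conj_mul]
  have htr : (U * diagonal (fun i => (f i - g i) * (f i - g i)) * star U).trace
      = ∑ i, (f i - g i) * (f i - g i) := by
    rw [Matrix.trace_mul_cycle, hUU, one_mul, trace_diagonal]
  rw [htr]
  -- bound each eigenvalue gap by √ε
  have hbound : ∀ i, (f i - g i) * (f i - g i) ≤ ε := by
    intro i
    have h0 : (0:ℝ) ≤ lam i := hA.eigenvalues_nonneg i
    have h1 : g i ≤ f i := Real.sqrt_le_sqrt (by linarith)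
    have h2 : f i ≤ g i + Real.sqrt ε := by
      have : lam i + ε ≤ (g i + Real.sqrt ε) ^ 2 := by
        have e1 : g i ^ 2 = lam i := Real.sq_sqrt h0
        have e2 : Real.sqrt ε ^ 2 = ε := Real.sq_sqrt hε
        have e3 : 0 ≤ g i := Real.sqrt_nonneg _
        have e4 : 0 ≤ Real.sqrt ε := Real.sqrt_nonneg _
        nlinarith
      calc f i = Real.sqrt (lam i + ε) := rfl
        _ ≤ Real.sqrt ((g i + Real.sqrt ε) ^ 2) := Real.sqrt_le_sqrt this
        _ = g i + Real.sqrt ε := Real.sqrt_sq (by positivity)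
    nlinarith [Real.sq_sqrt hε]
  have hsum : ∑ i, (f i - g i) * (f i - g i) ≤ (d : ℝ) * ε := by
    calc ∑ i, (f i - g i) * (f i - g i) ≤ ∑ _i : Fin d, ε :=
          Finset.sum_le_sum fun i _ => hbound i
      _ = (d : ℝ) * ε := by simp [mul_comm]
  calc Real.sqrt (∑ i, (f i - g i) * (f i - g i))
      ≤ Real.sqrt ((d : ℝ) * ε) := Real.sqrt_le_sqrt hsum
    _ = Real.sqrt d * Real.sqrt ε := Real.sqrt_mul (Nat.cast_nonneg d) ε
    _ ≤ d * Real.sqrt ε := by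
        gcongr
        have : (d : ℝ) ≤ (d : ℝ) ^ 2 := by
          rcases Nat.eq_zero_or_pos d with hd | hd
          · simp [hd]
          · have h1 : (1:ℝ) ≤ (d:ℝ) := by exact_mod_cast hd
            nlinarith
        calc Real.sqrt d ≤ Real.sqrt ((d:ℝ) ^ 2) := Real.sqrt_le_sqrt this
          _ = d := Real.sqrt_sq (Nat.cast_nonneg d)
end
end

section
/- Consider f(Σ_x, Σ_w) = Tr[Σ_x - Σ_x H^T (H Σ_x H^T + Σ_w)^{-1} H Σ_x] for Σ_x ∈ S_++^n, Σ_w ∈ S_++^m, and H ∈ R^{m×n}. Writing G = H Σ_x H^T + Σ_w, the gradient of f with respect to Σ_x is D_x = (I_n - Σ_x H^T G^{-1} H)^T (I_n - Σ_x H^T G^{-1} H) and with respect to Σ_w is D_w = G^{-1} H Σ_x^2 H^T G^{-1}; in particular both partial gradients are positive semidefinite. -/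
open Matrix
noncomputable section
open scoped Classical

attribute [local instance] Matrix.linftyOpNormedAddCommGroup Matrix.linftyOpNormedRing
  Matrix.linftyOpNormedAlgebra

/-- The sandwich map `M ↦ P * M * Pᵀ` as a continuous linear map. -/
def sandCLM {a b : ℕ} (P : Matrix (Fin a) (Fin b) ℝ) :
    Matrix (Fin b) (Fin b) ℝ →L[ℝ] Matrix (Fin a) (Fin a) ℝ :=
  LinearMap.toContinuousLinearMap
    { toFun := fun M => P * M * Pᵀ
      map_add' := fun M N => by simp [Matrix.mul_add, Matrix.add_mul]
      map_smul' := fun c M => by simp [Matrix.mul_smul, Matrix.smul_mul] }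

@[simp] lemma sandCLM_apply {a b : ℕ} (P : Matrix (Fin a) (Fin b) ℝ)
    (M : Matrix (Fin b) (Fin b) ℝ) : sandCLM P M = P * M * Pᵀ := rfl

/-- The trace as a continuous linear map. -/
def trCLM {a : ℕ} : Matrix (Fin a) (Fin a) ℝ →L[ℝ] ℝ :=
  LinearMap.toContinuousLinearMap (Matrix.traceLinearMap (Fin a) ℝ ℝ)

@[simp] lemma trCLM_apply {a : ℕ} (M : Matrix (Fin a) (Fin a) ℝ) : trCLM M = M.trace := rfl

set_option maxHeartbeats 1000000 in
/-- The key derivative computation. -/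
lemma mmse_hasDerivAt {n m : ℕ} (H : Matrix (Fin m) (Fin n) ℝ)
    (Sx Dlx : Matrix (Fin n) (Fin n) ℝ) (Sw Dlw : Matrix (Fin m) (Fin m) ℝ)
    (G : Matrix (Fin m) (Fin m) ℝ) (hG : G = H * Sx * Hᵀ + Sw) (hGu : IsUnit G) :
    HasDerivAt (fun t : ℝ =>
          ((Sx + t • Dlx)
            - (Sx + t • Dlx) * Hᵀ * (H * (Sx + t • Dlx) * Hᵀ + (Sw + t • Dlw))⁻¹
              * H * (Sx + t • Dlx)).trace)
        (Matrix.trace Dlx -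
          Matrix.trace ((Dlx * (Hᵀ * G⁻¹ * H) +
              Sx * (Hᵀ * (-(G⁻¹ * (H * Dlx * Hᵀ + Dlw) * G⁻¹)) * H)) * Sx
            + Sx * (Hᵀ * G⁻¹ * H) * Dlx)) 0 := by
  have hA : HasDerivAt (fun t : ℝ => Sx + t • Dlx) Dlx 0 := by
    have h := ((hasDerivAt_id (0:ℝ)).smul_const Dlx).const_add Sx
    simp only [id, one_smul] at h
    exact h
  have hW : HasDerivAt (fun t : ℝ => Sw + t • Dlw) Dlw 0 := by
    have h := ((hasDerivAt_id (0:ℝ)).smul_const Dlw).const_add Sw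
    simp only [id, one_smul] at h
    exact h
  set u := hGu.unit with hudef
  have hu : (u : Matrix (Fin m) (Fin m) ℝ) = G := hGu.unit_spec
  have huinv : ((u⁻¹ : (Matrix (Fin m) (Fin m) ℝ)ˣ) : Matrix (Fin m) (Fin m) ℝ) = G⁻¹ := by
    rw [Matrix.coe_units_inv, hu]
  have hGt : HasDerivAt (fun t : ℝ => H * (Sx + t • Dlx) * Hᵀ + (Sw + t • Dlw))
      (H * Dlx * Hᵀ + Dlw) 0 := by
    have h1 := (sandCLM H).hasFDerivAt.comp_hasDerivAt (x := (0:ℝ)) hA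
    have h2 := h1.add hW
    exact h2
  have h0 : H * (Sx + (0:ℝ) • Dlx) * Hᵀ + (Sw + (0:ℝ) • Dlw) = (u : Matrix (Fin m) (Fin m) ℝ) := by
    simp [hu, ← hG]
  have hinv' : HasFDerivAt Ring.inverse
      (-(ContinuousLinearMap.mulLeftRight ℝ _ (↑u⁻¹) (↑u⁻¹)))
      (H * (Sx + (0:ℝ) • Dlx) * Hᵀ + (Sw + (0:ℝ) • Dlw)) := by
    rw [h0]; exact hasFDerivAt_ringInverse u
  have hInv : HasDerivAt (fun t : ℝ => (H * (Sx + t • Dlx) * Hᵀ + (Sw + t • Dlw))⁻¹)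
      (-(G⁻¹ * (H * Dlx * Hᵀ + Dlw) * G⁻¹)) 0 := by
    have h2 := HasFDerivAt.comp_hasDerivAt (hf := hGt) (hl := hinv')
    have heq : (Ring.inverse ∘ fun t : ℝ => H * (Sx + t • Dlx) * Hᵀ + (Sw + t • Dlw))
        = fun t : ℝ => (H * (Sx + t • Dlx) * Hᵀ + (Sw + t • Dlw))⁻¹ := by
      funext t
      exact (Matrix.nonsing_inv_eq_ringInverse _).symm
    rw [heq] at h2
    simp [ContinuousLinearMap.mulLeftRight_apply, huinv] at h2
    exact h2
  have hB : HasDerivAt (fun t : ℝ => Hᵀ * (H * (Sx + t • Dlx) * Hᵀ + (Sw + t • Dlw))⁻¹ * H)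
      (Hᵀ * (-(G⁻¹ * (H * Dlx * Hᵀ + Dlw) * G⁻¹)) * H) 0 := by
    have := (sandCLM Hᵀ).hasFDerivAt.comp_hasDerivAt (x := (0:ℝ)) hInv
    simp [Function.comp_def] at this
    exact this
  have hProd := (hA.mul hB).mul hA
  have hTr := HasFDerivAt.comp_hasDerivAt (hf := hProd) (hl := trCLM.hasFDerivAt)
  have h1 := HasFDerivAt.comp_hasDerivAt (hf := hA) (hl := trCLM.hasFDerivAt)
  have hfin := h1.sub hTr
  have hfeq : (fun t : ℝ =>
          ((Sx + t • Dlx)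
            - (Sx + t • Dlx) * Hᵀ * (H * (Sx + t • Dlx) * Hᵀ + (Sw + t • Dlw))⁻¹
              * H * (Sx + t • Dlx)).trace)
      = fun t : ℝ => trCLM (Sx + t • Dlx) -
          trCLM ((Sx + t • Dlx) * (Hᵀ * (H * (Sx + t • Dlx) * Hᵀ + (Sw + t • Dlw))⁻¹ * H)
            * (Sx + t • Dlx)) := by
    funext t
    simp only [trCLM_apply, ← Matrix.trace_sub]
    congr 1
    simp only [Matrix.mul_assoc]
  rw [hfeq]
  refine hfin.congr_deriv ?_
  simp only [trCLM_apply, zero_smul, add_zero, ← hG, Pi.mul_apply]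
  rfl

/-- The trace identity identifying the derivative with the claimed gradients. -/
lemma mmse_trace_identity {n m : ℕ} (H : Matrix (Fin m) (Fin n) ℝ)
    (Sx Dlx Dx : Matrix (Fin n) (Fin n) ℝ) (Dlw G Dw : Matrix (Fin m) (Fin m) ℝ)
    (hSxT : Sxᵀ = Sx) (hGiT : (G⁻¹)ᵀ = G⁻¹)
    (hDx : Dx = ((1 : Matrix (Fin n) (Fin n) ℝ) - Sx * Hᵀ * G⁻¹ * H)ᵀ *
        ((1 : Matrix (Fin n) (Fin n) ℝ) - Sx * Hᵀ * G⁻¹ * H))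
    (hDw : Dw = G⁻¹ * H * (Sx * Sx) * Hᵀ * G⁻¹) :
    ip Dx Dlx + ip Dw Dlw =
      Matrix.trace Dlx -
          Matrix.trace ((Dlx * (Hᵀ * G⁻¹ * H) +
              Sx * (Hᵀ * (-(G⁻¹ * (H * Dlx * Hᵀ + Dlw) * G⁻¹)) * H)) * Sx
            + Sx * (Hᵀ * G⁻¹ * H) * Dlx) := by
  rw [ip, ip, hDx, hDw]
  simp only [Matrix.transpose_mul, Matrix.transpose_one, Matrix.transpose_sub,
    Matrix.transpose_transpose, hSxT, hGiT, Matrix.mul_add, Matrix.add_mul,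
    Matrix.mul_sub, Matrix.sub_mul, Matrix.mul_neg, Matrix.neg_mul, Matrix.mul_one,
    Matrix.one_mul, Matrix.trace_add, Matrix.trace_sub, Matrix.trace_neg, Matrix.mul_assoc]
  have e1 : (Dlx * (Hᵀ * (G⁻¹ * (H * Sx)))).trace
      = (Hᵀ * (G⁻¹ * (H * (Sx * Dlx)))).trace := by
    rw [Matrix.trace_mul_comm]
    simp [Matrix.mul_assoc]
  have e2 : (Sx * (Hᵀ * (G⁻¹ * (H * (Dlx * (Hᵀ * (G⁻¹ * (H * Sx)))))))).trace
      = (Hᵀ * (G⁻¹ * (H * (Sx * (Sx * (Hᵀ * (G⁻¹ * (H * Dlx)))))))).trace := by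
    rw [show Sx * (Hᵀ * (G⁻¹ * (H * (Dlx * (Hᵀ * (G⁻¹ * (H * Sx)))))))
        = (Sx * (Hᵀ * (G⁻¹ * (H * Dlx)))) * (Hᵀ * (G⁻¹ * (H * Sx))) by
      simp [Matrix.mul_assoc], Matrix.trace_mul_comm]
    simp [Matrix.mul_assoc]
  have e3 : (Sx * (Hᵀ * (G⁻¹ * (Dlw * (G⁻¹ * (H * Sx)))))).trace
      = (G⁻¹ * (H * (Sx * (Sx * (Hᵀ * (G⁻¹ * Dlw)))))).trace := by
    rw [show Sx * (Hᵀ * (G⁻¹ * (Dlw * (G⁻¹ * (H * Sx)))))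
        = (Sx * (Hᵀ * (G⁻¹ * Dlw))) * (G⁻¹ * (H * Sx)) by
      simp [Matrix.mul_assoc], Matrix.trace_mul_comm]
    simp [Matrix.mul_assoc]
  rw [e1, e2, e3]
  ring

/-- Gradient of the MMSE objective
`f(Sx, Sw) = Tr[Sx − Sx Hᵀ (H Sx Hᵀ + Sw)⁻¹ H Sx]` with respect to the trace
inner product, and positive semidefiniteness of both partial gradients. -/
theorem mmse_gradient {n m : ℕ} (H : Matrix (Fin m) (Fin n) ℝ)
    (Sx : Matrix (Fin n) (Fin n) ℝ) (Sw : Matrix (Fin m) (Fin m) ℝ)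
    (hx : Sx.PosDef) (hw : Sw.PosDef)
    (G : Matrix (Fin m) (Fin m) ℝ) (hG : G = H * Sx * Hᵀ + Sw)
    (Dx : Matrix (Fin n) (Fin n) ℝ)
    (hDx : Dx = ((1 : Matrix (Fin n) (Fin n) ℝ) - Sx * Hᵀ * G⁻¹ * H)ᵀ *
        ((1 : Matrix (Fin n) (Fin n) ℝ) - Sx * Hᵀ * G⁻¹ * H))
    (Dw : Matrix (Fin m) (Fin m) ℝ)
    (hDw : Dw = G⁻¹ * H * (Sx * Sx) * Hᵀ * G⁻¹) :
    (∀ (Dlx : Matrix (Fin n) (Fin n) ℝ) (Dlw : Matrix (Fin m) (Fin m) ℝ),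
      HasDerivAt (fun t : ℝ =>
          ((Sx + t • Dlx)
            - (Sx + t • Dlx) * Hᵀ * (H * (Sx + t • Dlx) * Hᵀ + (Sw + t • Dlw))⁻¹
              * H * (Sx + t • Dlx)).trace)
        (ip Dx Dlx + ip Dw Dlw) 0) ∧
    Dx.PosSemidef ∧ Dw.PosSemidef := by
  have hSxT : Sxᵀ = Sx := by
    rw [← Matrix.conjTranspose_eq_transpose_of_trivial]; exact hx.isHermitian
  have hHSH : (H * Sx * Hᵀ).PosSemidef := by
    have := hx.posSemidef.mul_mul_conjTranspose_same H
    rwa [Matrix.conjTranspose_eq_transpose_of_trivial] at this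
  have hGpd : G.PosDef := by
    rw [hG]; exact Matrix.PosDef.posSemidef_add hHSH hw
  have hGT : Gᵀ = G := by
    rw [← Matrix.conjTranspose_eq_transpose_of_trivial]; exact hGpd.isHermitian
  have hGiT : (G⁻¹)ᵀ = G⁻¹ := by rw [Matrix.transpose_nonsing_inv, hGT]
  refine ⟨fun Dlx Dlw => ?_, ?_, ?_⟩
  · rw [mmse_trace_identity H Sx Dlx Dx Dlw G Dw hSxT hGiT hDx hDw]
    exact mmse_hasDerivAt H Sx Dlx Sw Dlw G hG hGpd.isUnit
  · have : Dx = ((1 : Matrix (Fin n) (Fin n) ℝ) - Sx * Hᵀ * G⁻¹ * H)ᴴ *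
        ((1 : Matrix (Fin n) (Fin n) ℝ) - Sx * Hᵀ * G⁻¹ * H) := by
      rw [hDx, Matrix.conjTranspose_eq_transpose_of_trivial]
    rw [this]
    exact Matrix.posSemidef_conjTranspose_mul_self _
  · have : Dw = (Sx * Hᵀ * G⁻¹)ᴴ * (Sx * Hᵀ * G⁻¹) := by
      rw [hDw, Matrix.conjTranspose_eq_transpose_of_trivial]
      simp [Matrix.transpose_mul, hSxT, hGiT, Matrix.mul_assoc, Matrix.transpose_transpose]
    rw [this]
    exact Matrix.posSemidef_conjTranspose_mul_self _
end
end
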